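/- Let A be a bounded self-adjoint operator on a complex Hilbert space, ψ a unit vector, and φ ∈ ℝ. Then Var_ψ(exp(iφA)) ≤ φ² Var_ψ(A), where exp(iφA) denotes the operator exponential of iφA. -/

import Mathlib

/-!
Write `A = r + B` with `r = ⟨ψ, Aψ⟩` real. Then `exp (iφA) = e^{iφr} exp (iφB)`, and the variance of
an operator `U` is the least value of `‖Uψ - cψ‖ ^ 2` over `c : ℂ`; taking `c = e^{iφr}` leaves
`‖exp (iφB) ψ - ψ‖`. Since `exp (itB)` is unitary, the curve `t ↦ exp (itB) ψ` has constant speed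
`‖Bψ‖`, so this distance is at most `|φ| ‖Bψ‖ = |φ| √(Var ψ A)`.
-/

open NormedSpace
open Complex (I)

/-- Variance of a bounded operator in a state: `Var ψ A = ‖(A - ⟨ψ, Aψ⟩)ψ‖ ^ 2`. -/
noncomputable def Var {H : Type*} [NormedAddCommGroup H] [InnerProductSpace ℂ H]
    (ψ : H) (A : H →L[ℂ] H) : ℝ :=
  ‖A ψ - (inner ℂ ψ (A ψ) : ℂ) • ψ‖ ^ 2

section Variance

variable {H : Type*} [NormedAddCommGroup H] [InnerProductSpace ℂ H]

theorem Var_le_norm_sub_smul_sq {ψ : H} (hψ : ‖ψ‖ = 1) (A : H →L[ℂ] H) (c : ℂ) :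
    Var ψ A ≤ ‖A ψ - c • ψ‖ ^ 2 := by
  set m := inner ℂ ψ (A ψ)
  have horth : inner ℂ (A ψ - m • ψ) ((m - c) • ψ) = 0 := by
    have hconj : inner ℂ (A ψ) ψ = starRingEnd ℂ m := (inner_conj_symm _ _).symm
    rw [inner_smul_right, inner_sub_left, inner_smul_left, inner_self_eq_norm_sq_to_K, hψ, hconj]
    simp
  calc Var ψ A = ‖A ψ - m • ψ‖ ^ 2 := rfl
    _ ≤ ‖A ψ - m • ψ‖ ^ 2 + ‖(m - c) • ψ‖ ^ 2 := le_add_of_nonneg_right (sq_nonneg _)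
    _ = ‖A ψ - c • ψ‖ ^ 2 := by
      rw [sq, sq, sq, ← norm_add_sq_eq_norm_sq_add_norm_sq_of_inner_eq_zero _ _ horth, sub_smul,
        sub_add_sub_cancel]

end Variance

theorem exp_algebraMap_add {𝕂 𝔸 : Type*} [RCLike 𝕂] [NormedRing 𝔸] [NormedAlgebra 𝕂 𝔸]
    [CompleteSpace 𝔸] (z : 𝕂) (x : 𝔸) :
    exp (algebraMap 𝕂 𝔸 z + x) = exp z • exp x := by
  let +nondep : NormedAlgebra ℚ 𝔸 := .restrictScalars ℚ 𝕂 𝔸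
  rw [exp_add_of_commute (Algebra.commutes z x), ← algebraMap_exp_comm, Algebra.smul_def]

section SelfAdjoint

variable {H : Type*} [NormedAddCommGroup H] [InnerProductSpace ℂ H] [CompleteSpace H]
  {B : H →L[ℂ] H}

theorem IsSelfAdjoint.norm_exp_I_smul_apply (hB : IsSelfAdjoint B) (v : H) :
    ‖NormedSpace.exp (I • B) v‖ = ‖v‖ :=
  ContinuousLinearMap.norm_map_of_mem_unitary (selfAdjoint.expUnitary ⟨B, hB⟩).prop v

theorem IsSelfAdjoint.norm_exp_I_mul_ofReal_smul_apply_sub_self_le (hB : IsSelfAdjoint B)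
    (t : ℝ) (v : H) : ‖NormedSpace.exp ((I * t) • B) v - v‖ ≤ |t| * ‖B v‖ := by
  have hderiv (s : ℝ) :
      HasDerivAt (fun u : ℝ ↦ NormedSpace.exp (u • I • B) v)
        (NormedSpace.exp (s • I • B) (I • B v)) s :=
    ((ContinuousLinearMap.apply ℂ H v).restrictScalars ℝ).hasFDerivAt.comp_hasDerivAt s
      (hasDerivAt_exp_smul_const (I • B) s)
  have hsmul (s : ℝ) : s • I • B = I • (s : ℂ) • B := by
    rw [smul_comm, RCLike.real_smul_eq_coe_smul (K := ℂ)]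
    rfl
  have hnorm (s : ℝ) : ‖NormedSpace.exp (s • I • B) (I • B v)‖ = ‖B v‖ := by
    rw [hsmul, (IsSelfAdjoint.smul (Complex.conj_ofReal s) hB).norm_exp_I_smul_apply,
      norm_smul, Complex.norm_I, one_mul]
  have hmvt := (convex_uIcc (0 : ℝ) t).norm_image_sub_le_of_norm_hasDerivWithin_le
    (fun s _ ↦ (hderiv s).hasDerivWithinAt) (fun s _ ↦ (hnorm s).le)
    Set.left_mem_uIcc Set.right_mem_uIcc
  rw [hsmul, ← mul_smul] at hmvt
  simpa [mul_comm] using hmvt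

end SelfAdjoint

/-- For a bounded self-adjoint operator `A`, a unit vector `ψ` and `φ : ℝ`, the variance of the
unitary `exp (i φ A)` is controlled by that of `A`: `Var ψ (exp (iφA)) ≤ φ ^ 2 * Var ψ A`. -/
theorem variance_of_exponential {H : Type*} [NormedAddCommGroup H] [InnerProductSpace ℂ H]
    [CompleteSpace H] (A : H →L[ℂ] H) (hA : IsSelfAdjoint A)
    (ψ : H) (hψ : ‖ψ‖ = 1) (φ : ℝ) :
    Var ψ (NormedSpace.exp ((Complex.I * (φ : ℂ)) • A)) ≤ φ ^ 2 * Var ψ A := by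
  obtain ⟨r, hr⟩ : ∃ r : ℝ, inner ℂ ψ (A ψ) = r :=
    ⟨_, (hA.isSymmetric ψ ψ ▸ hA.isSymmetric.coe_re_inner_apply_self ψ).symm⟩
  set B := A - algebraMap ℂ _ r
  have hB : IsSelfAdjoint B := hA.sub (.algebraMap _ (Complex.conj_ofReal r))
  have hexp : exp ((I * φ) • A) = exp (I * φ * r) • exp ((I * φ) • B) := by
    rw [← exp_algebraMap_add, smul_sub, map_mul, ← Algebra.smul_def, add_sub_cancel]
  have hphase : ‖exp (I * φ * r)‖ = 1 := by
    rw [← Complex.exp_eq_exp_ℂ, ← Complex.norm_exp_ofReal_mul_I (φ * r)]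
    push_cast
    ring_nf
  calc Var ψ (exp ((I * φ) • A)) ≤ ‖exp ((I * φ) • A) ψ - exp (I * φ * r) • ψ‖ ^ 2 :=
        Var_le_norm_sub_smul_sq hψ _ _
    _ = ‖exp ((I * φ) • B) ψ - ψ‖ ^ 2 := by
        rw [hexp, smul_apply, ← smul_sub, norm_smul, hphase, one_mul]
    _ ≤ (|φ| * ‖B ψ‖) ^ 2 := by
        gcongr
        exact hB.norm_exp_I_mul_ofReal_smul_apply_sub_self_le φ ψ
    _ = φ ^ 2 * Var ψ A := by
        rw [mul_pow, sq_abs, Var, hr]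
        rfl
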